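/- arXiv:0903.4754 — 2 statements merged into one kernel-verified Lean document; each statement's English description precedes it below -/
import Mathlib

section
/- Let n ≥ 2 and let f : EuclideanSpace ℝ (Fin (n+1)) → ℝ be continuous. Suppose that for every pair of orthonormal vectors u, v in EuclideanSpace ℝ (Fin (n+1)) one has ∫_{0}^{2π} f((cos t) • u + (sin t) • v) dt = 0 (i.e. the Funk transform of f vanishes on all great circles of the unit sphere). Then f is odd on the unit sphere: f(-x) = -f(x) for every x with ‖x‖ = 1. -/
/-!
Replacing `f` by its even part `y ↦ f y + f (-y)`, it suffices to show that a continuous even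
`g` whose great-circle integrals vanish is zero at every unit vector `x`. Complete `x` to an
orthonormal triple `x, e₁, e₂` and let `H c` be the integral of `g` over the circle of latitude
`c` (about the pole `x`) of the unit sphere of `span {x, e₁, e₂}`. Rotating one great circle
about `x` sweeps out the latitude circles, so by Fubini `∫₀^{2π} H (s cos t) dt = 0` for
`s ∈ [0, 1]`. Integrating this against `sin φ dφ` over `[0, π/2]` and using Archimedes' theorem on
the hemisphere (checked on monomials through Wallis' integrals, then extended by Weierstrass
approximation) gives `∫_{-σ}^{σ} H = 0` for `σ ∈ [0, 1]`. As `H` is even, it vanishes on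
`[0, 1]`, and `H 1 = 2π g x`.
-/

open Real intervalIntegral Set Filter Topology
open scoped RealInnerProductSpace

lemma Function.Periodic.intervalIntegral_comp_add_right {F : ℝ → ℝ} {T : ℝ}
    (hF : Function.Periodic F T) (α : ℝ) :
    ∫ t in (0 : ℝ)..T, F (t + α) = ∫ t in (0 : ℝ)..T, F t := by
  rw [intervalIntegral.integral_comp_add_right, zero_add, add_comm,
    hF.intervalIntegral_add_eq α 0, zero_add]

lemma intervalIntegral_intervalIntegral_swap_of_continuous {F : ℝ → ℝ → ℝ}
    (hF : Continuous F.uncurry) (a b c d : ℝ) :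
    ∫ x in a..b, ∫ y in c..d, F x y = ∫ y in c..d, ∫ x in a..b, F x y :=
  MeasureTheory.intervalIntegral_intervalIntegral_swap <|
    (hF.continuousOn.integrableOn_compact (isCompact_uIcc.prod isCompact_uIcc)).mono_set
      (prod_mono uIoc_subset_uIcc uIoc_subset_uIcc)

lemma integral_comp_rotation (φ : ℝ → ℝ → ℝ) (a b : ℝ) :
    ∫ τ in (0 : ℝ)..2 * π, φ (a * cos τ - b * sin τ) (a * sin τ + b * cos τ) =
      ∫ τ in (0 : ℝ)..2 * π, φ (√(a ^ 2 + b ^ 2) * cos τ) (√(a ^ 2 + b ^ 2) * sin τ) := by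
  set z : ℂ := ⟨a, b⟩
  have hr : ‖z‖ = √(a ^ 2 + b ^ 2) := by
    rw [Complex.norm_def, Complex.normSq_apply]; ring_nf; rfl
  have hperiodic : Function.Periodic
      (fun τ => φ (√(a ^ 2 + b ^ 2) * cos τ) (√(a ^ 2 + b ^ 2) * sin τ)) (2 * π) := fun τ => by
    simp only [cos_add_two_pi, sin_add_two_pi]
  rw [← hperiodic.intervalIntegral_comp_add_right z.arg, ← hr]
  congr 1; ext τ
  have hre : ‖z‖ * cos z.arg = a := Complex.norm_mul_cos_arg z
  have him : ‖z‖ * sin z.arg = b := Complex.norm_mul_sin_arg z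
  rw [cos_add, sin_add, ← hre, ← him]
  ring_nf

lemma integral_cos_pow_mul_integral_sin_pow_succ (k : ℕ) :
    (∫ t in (0 : ℝ)..2 * π, cos t ^ k) * (∫ φ in (0 : ℝ)..π / 2, sin φ ^ (k + 1)) =
      π * ∫ u in (-1 : ℝ)..1, u ^ k := by
  induction k using Nat.twoStepInduction with
  | zero => simp [mul_comm, one_add_one_eq_two]
  | one => simp
  | more k ih _ =>
    rw [integral_cos_pow, show k + 2 + 1 = (k + 1) + 2 by ring, integral_sin_pow]
    simp only [integral_pow, sin_two_pi, sin_zero, cos_pi_div_two, mul_zero, sub_zero,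
      zero_div, zero_add, one_pow, ne_eq, add_eq_zero, one_ne_zero, and_false,
      not_false_eq_true, zero_pow, zero_mul] at ih ⊢
    rw [show k + 2 + 1 = (k + 1) + 2 by ring, pow_add (-1 : ℝ) (k + 1) 2]
    have hk : (k : ℝ) + 1 ≠ 0 := by positivity
    have hk' : (k : ℝ) + 2 ≠ 0 := by positivity
    have hk'' : (k : ℝ) + 3 ≠ 0 := by positivity
    push_cast at *
    field_simp at *
    linear_combination (k + 2) * (k + 3) * ih

lemma eq_zero_of_forall_monomial {a b C : ℝ} {T : (ℝ → ℝ) → ℝ}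
    (hsub : ∀ F G, Continuous F → Continuous G → T (F - G) = T F - T G)
    (hbound : ∀ F ε, Continuous F → (∀ u ∈ Icc a b, |F u| ≤ ε) → |T F| ≤ C * ε)
    (hmonomial : ∀ c k, T (fun u => c * u ^ k) = 0) {F : ℝ → ℝ} (hF : Continuous F) :
    T F = 0 := by
  have hpoly (P : Polynomial ℝ) : T (fun u => P.eval u) = 0 := by
    induction P using Polynomial.induction_on' with
    | add p q hp hq =>
      have h := hsub (fun u => (p + q).eval u) (fun u => q.eval u) (p + q).continuous q.continuous
      rw [hq, sub_zero] at h
      rw [← h, ← hp]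
      congr 1; ext u; simp
    | monomial k c => simpa using hmonomial c k
  have hsmall : ∀ ε > 0, |T F| ≤ C * ε := by
    intro ε hε
    obtain ⟨P, hP⟩ := exists_polynomial_near_of_continuousOn a b F hF.continuousOn ε hε
    rw [← sub_zero (T F), ← hpoly P, ← hsub _ _ hF P.continuous]
    refine hbound _ _ (hF.sub P.continuous) fun u hu => ?_
    simpa [abs_sub_comm] using (hP u hu).le
  have hlim : Tendsto (fun ε => C * ε) (𝓝[>] 0) (𝓝 0) := by
    simpa using (continuous_const_mul C).continuousWithinAt (s := Ioi 0) (x := 0) |>.tendsto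
  exact abs_nonpos_iff.mp (ge_of_tendsto hlim (eventually_nhdsWithin_of_forall hsmall))

noncomputable def cosTransform (H : ℝ → ℝ) (s : ℝ) : ℝ := ∫ t in (0 : ℝ)..2 * π, H (s * cos t)

/-- The integral of `y ↦ G y₁` over the upper unit hemisphere of `ℝ³`, in the spherical coordinates
`y = (sin φ cos t, sin φ sin t, cos φ)` with area element `sin φ dφ dt`. -/
noncomputable def hemisphereIntegral (G : ℝ → ℝ) : ℝ :=
  ∫ φ in (0 : ℝ)..π / 2, cosTransform G (sin φ) * sin φ

lemma continuous_cosTransform {H : ℝ → ℝ} (hH : Continuous H) : Continuous (cosTransform H) :=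
  continuous_parametric_intervalIntegral_of_continuous' (by fun_prop) _ _

lemma cosTransform_sub {F G : ℝ → ℝ} (hF : Continuous F) (hG : Continuous G) (s : ℝ) :
    cosTransform (F - G) s = cosTransform F s - cosTransform G s :=
  integral_sub ((hF.comp (by fun_prop)).intervalIntegrable _ _)
    ((hG.comp (by fun_prop)).intervalIntegrable _ _)

lemma cosTransform_comp_mul (H : ℝ → ℝ) (σ s : ℝ) :
    cosTransform (fun u => H (σ * u)) s = cosTransform H (σ * s) := by
  simp only [cosTransform, mul_assoc]

lemma cosTransform_monomial (c : ℝ) (k : ℕ) (s : ℝ) :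
    cosTransform (fun u => c * u ^ k) s = c * s ^ k * ∫ t in (0 : ℝ)..2 * π, cos t ^ k := by
  simp only [cosTransform, mul_pow, ← integral_const_mul]
  ring_nf

lemma abs_cosTransform_le {H : ℝ → ℝ} {ε s : ℝ} (hH : ∀ u ∈ Icc (-1) 1, |H u| ≤ ε)
    (hs : |s| ≤ 1) : |cosTransform H s| ≤ ε * (2 * π) := by
  have h := norm_integral_le_of_norm_le_const (a := 0) (b := 2 * π) (C := ε)
    (f := fun t => H (s * cos t)) fun t _ => hH _ <| abs_le.mp <| by
      rw [abs_mul]; exact mul_le_one₀ hs (abs_nonneg _) (abs_cos_le_one t)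
  rwa [sub_zero, abs_of_pos two_pi_pos] at h

lemma hemisphereIntegral_sub {F G : ℝ → ℝ} (hF : Continuous F) (hG : Continuous G) :
    hemisphereIntegral (F - G) = hemisphereIntegral F - hemisphereIntegral G := by
  simp only [hemisphereIntegral, cosTransform_sub hF hG, sub_mul]
  exact integral_sub
    ((((continuous_cosTransform hF).comp continuous_sin).mul continuous_sin).intervalIntegrable _ _)
    ((((continuous_cosTransform hG).comp continuous_sin).mul continuous_sin).intervalIntegrable _ _)

lemma abs_hemisphereIntegral_le {G : ℝ → ℝ} {ε : ℝ} (hG : ∀ u ∈ Icc (-1) 1, |G u| ≤ ε) :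
    |hemisphereIntegral G| ≤ π ^ 2 * ε := by
  have h := norm_integral_le_of_norm_le_const (a := 0) (b := π / 2) (C := ε * (2 * π))
    (f := fun φ => cosTransform G (sin φ) * sin φ) fun φ _ => by
      rw [norm_mul, ← mul_one (ε * (2 * π))]
      exact mul_le_mul (abs_cosTransform_le hG (abs_sin_le_one φ)) (abs_sin_le_one φ)
        (abs_nonneg _) ((abs_nonneg _).trans (abs_cosTransform_le hG (abs_sin_le_one φ)))
  rw [sub_zero, abs_of_pos (by positivity)] at h
  exact h.trans_eq (by ring)

theorem hemisphereIntegral_eq {G : ℝ → ℝ} (hG : Continuous G) :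
    hemisphereIntegral G = π * ∫ u in (-1 : ℝ)..1, G u := by
  rw [← sub_eq_zero]
  refine eq_zero_of_forall_monomial
    (T := fun G => hemisphereIntegral G - π * ∫ u in (-1 : ℝ)..1, G u)
    (C := π ^ 2 + 2 * π) (a := -1) (b := 1) ?_ ?_ ?_ hG
  · intro F G hF hG
    simp only [hemisphereIntegral_sub hF hG, Pi.sub_apply,
      integral_sub (hF.intervalIntegrable _ _) (hG.intervalIntegrable _ _)]
    ring
  · intro F ε hF hFε
    have hinterval : |∫ u in (-1 : ℝ)..1, F u| ≤ ε * 2 := by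
      simpa [one_add_one_eq_two] using norm_integral_le_of_norm_le_const (a := -1) (b := 1) (f := F)
        fun u hu => hFε u (Ioc_subset_Icc_self (by simpa using hu))
    calc |hemisphereIntegral F - π * ∫ u in (-1 : ℝ)..1, F u|
        ≤ |hemisphereIntegral F| + π * |∫ u in (-1 : ℝ)..1, F u| :=
          (abs_sub _ _).trans_eq (by rw [abs_mul, abs_of_pos pi_pos])
      _ ≤ π ^ 2 * ε + π * (ε * 2) := by gcongr; exact abs_hemisphereIntegral_le hFε
      _ = (π ^ 2 + 2 * π) * ε := by ring
  · intro c k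
    rw [sub_eq_zero, integral_const_mul, ← mul_left_comm,
      ← integral_cos_pow_mul_integral_sin_pow_succ, hemisphereIntegral, ← integral_const_mul,
      ← integral_const_mul]
    congr 1; ext φ; rw [cosTransform_monomial]; ring

lemma Function.Even.integral_neg_to_self_eq_two_mul {H : ℝ → ℝ} (hH : Continuous H) (heven : H.Even)
    (σ : ℝ) : ∫ u in -σ..σ, H u = 2 * ∫ u in 0..σ, H u := by
  have h := integral_comp_neg (a := 0) (b := σ) H
  simp only [heven.eq, neg_zero] at h
  rw [← integral_add_adjacent_intervals (b := 0) (hH.intervalIntegrable _ _)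
    (hH.intervalIntegrable _ _), ← h]
  ring

lemma integral_neg_to_self_eq_zero_of_cosTransform_eq_zero {H : ℝ → ℝ} (hH : Continuous H)
    (hW : ∀ s ∈ Icc (0 : ℝ) 1, cosTransform H s = 0) {σ : ℝ} (hσ : σ ∈ Icc (0 : ℝ) 1) :
    ∫ u in -σ..σ, H u = 0 := by
  rcases hσ.1.eq_or_lt with rfl | hσpos
  · simp
  have hzero : hemisphereIntegral (fun u => H (σ * u)) = 0 := by
    refine (integral_congr fun φ hφ => ?_).trans integral_zero
    rw [uIcc_of_le (by positivity)] at hφ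
    have hsin := sin_nonneg_of_nonneg_of_le_pi hφ.1 (by linarith [hφ.2, pi_pos])
    rw [cosTransform_comp_mul, hW _ ⟨by positivity, by nlinarith [hσ.2, sin_le_one φ]⟩, zero_mul]
  rw [hemisphereIntegral_eq (by fun_prop), integral_comp_mul_left _ hσpos.ne'] at hzero
  simpa [pi_ne_zero, hσpos.ne'] using hzero

theorem eqOn_zero_of_cosTransform_eq_zero {H : ℝ → ℝ} (hH : Continuous H) (heven : H.Even)
    (hW : ∀ s ∈ Icc (0 : ℝ) 1, cosTransform H s = 0) : EqOn H 0 (Icc 0 1) := by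
  have hprimitive : ∀ σ ∈ Icc (0 : ℝ) 1, ∫ u in 0..σ, H u = 0 := fun σ hσ => by
    simpa [heven.integral_neg_to_self_eq_two_mul hH] using
      integral_neg_to_self_eq_zero_of_cosTransform_eq_zero hH hW hσ
  have hIoo : EqOn H 0 (Ioo 0 1) := fun σ hσ => by
    have hloc : (fun u => ∫ x in (0 : ℝ)..u, H x) =ᶠ[𝓝 σ] fun _ => 0 :=
      eventually_of_mem (Ioo_mem_nhds hσ.1 hσ.2) fun u hu => hprimitive u (Ioo_subset_Icc_self hu)
    rw [← hH.deriv_integral _ 0 σ, hloc.deriv_eq, deriv_const, Pi.zero_apply]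
  exact hIoo.of_subset_closure hH.continuousOn continuousOn_const Ioo_subset_Icc_self
    (by rw [closure_Ioo zero_ne_one])

section Sphere

variable {E : Type*} [NormedAddCommGroup E] [InnerProductSpace ℝ E]

noncomputable def funkTransform (f : E → ℝ) (u v : E) : ℝ :=
  ∫ t in (0 : ℝ)..2 * π, f (cos t • u + sin t • v)

lemma funkTransform_add {f g : E → ℝ} (hf : Continuous f) (hg : Continuous g) (u v : E) :
    funkTransform (f + g) u v = funkTransform f u v + funkTransform g u v :=
  integral_add ((hf.comp (by fun_prop)).intervalIntegrable _ _)
    ((hg.comp (by fun_prop)).intervalIntegrable _ _)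

lemma funkTransform_comp_neg (f : E → ℝ) (u v : E) :
    funkTransform (fun y => f (-y)) u v = funkTransform f u v := by
  have hperiodic : Function.Periodic (fun t => f (cos t • u + sin t • v)) (2 * π) := fun t => by
    simp only [cos_add_two_pi, sin_add_two_pi]
  rw [funkTransform, funkTransform, ← hperiodic.intervalIntegral_comp_add_right π]
  simp only [cos_add_pi, sin_add_pi, neg_smul, neg_add]

lemma Orthonormal.inner_smul_add_smul_add_smul {x e₁ e₂ : E} (hon : Orthonormal ℝ ![x, e₁, e₂])
    (c a b c' a' b' : ℝ) :
    ⟪c • x + a • e₁ + b • e₂, c' • x + a' • e₁ + b' • e₂⟫ = c * c' + a * a' + b * b' := by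
  simpa [Fin.sum_univ_three, add_assoc] using hon.inner_sum ![c, a, b] ![c', a', b'] Finset.univ

lemma Orthonormal.norm_smul_add_smul_add_smul {x e₁ e₂ : E} (hon : Orthonormal ℝ ![x, e₁, e₂])
    {c a b : ℝ} (h : c ^ 2 + a ^ 2 + b ^ 2 = 1) : ‖c • x + a • e₁ + b • e₂‖ = 1 := by
  rw [norm_eq_sqrt_real_inner, hon.inner_smul_add_smul_add_smul, ← sqrt_one, ← h]
  ring_nf

noncomputable def latitudeIntegral (g : E → ℝ) (x e₁ e₂ : E) (c : ℝ) : ℝ :=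
  ∫ τ in (0 : ℝ)..2 * π, g (c • x + (√(1 - c ^ 2) * cos τ) • e₁ + (√(1 - c ^ 2) * sin τ) • e₂)

variable {g : E → ℝ} {x e₁ e₂ : E}

lemma integral_rotation_eq_latitudeIntegral (g : E → ℝ) (x e₁ e₂ : E) {a b c : ℝ}
    (h : a ^ 2 + b ^ 2 = 1 - c ^ 2) :
    ∫ τ in (0 : ℝ)..2 * π,
        g (c • x + (a * cos τ - b * sin τ) • e₁ + (a * sin τ + b * cos τ) • e₂) =
      latitudeIntegral g x e₁ e₂ c := by
  rw [integral_comp_rotation (fun u v => g (c • x + u • e₁ + v • e₂)), h, latitudeIntegral]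

lemma continuous_latitudeIntegral (hg : Continuous g) :
    Continuous (latitudeIntegral g x e₁ e₂) :=
  continuous_parametric_intervalIntegral_of_continuous' (by fun_prop) _ _

lemma latitudeIntegral_even (heven : g.Even) : (latitudeIntegral g x e₁ e₂).Even := fun c => by
  have h := integral_comp_rotation (fun u v => g (c • x + u • e₁ + v • e₂)) (-√(1 - c ^ 2)) 0
  simp only [neg_sq, zero_pow two_ne_zero, add_zero, sqrt_sq (sqrt_nonneg _)] at h
  rw [latitudeIntegral, latitudeIntegral, ← h, neg_sq]
  congr 1; ext τ
  rw [← heven]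
  congr 1
  module

lemma latitudeIntegral_one (g : E → ℝ) (x e₁ e₂ : E) :
    latitudeIntegral g x e₁ e₂ 1 = 2 * π * g x := by
  simp [latitudeIntegral]

lemma cosTransform_latitudeIntegral_eq_zero (hg : Continuous g) (hon : Orthonormal ℝ ![x, e₁, e₂])
    (hfunk : ∀ u v : E, ‖u‖ = 1 → ‖v‖ = 1 → ⟪u, v⟫ = 0 → funkTransform g u v = 0)
    {s : ℝ} (hs : s ^ 2 ≤ 1) : cosTransform (latitudeIntegral g x e₁ e₂) s = 0 := by
  set r := √(1 - s ^ 2)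
  have hr : r ^ 2 = 1 - s ^ 2 := sq_sqrt (by linarith)
  -- Rotating the great circle through `s • x + r • e₁` and `e₂` by the angle `τ` about `x`;
  -- its point of parameter `t` lies on the circle of latitude `s * cos t`.
  let U : ℝ → E := fun τ => s • x + (r * cos τ) • e₁ + (r * sin τ) • e₂
  let V : ℝ → E := fun τ => (0 : ℝ) • x + (-sin τ) • e₁ + cos τ • e₂
  have hcircle : ∀ τ, funkTransform g (U τ) (V τ) = 0 := fun τ => by
    refine hfunk _ _ (hon.norm_smul_add_smul_add_smul ?_) (hon.norm_smul_add_smul_add_smul ?_) ?_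
    · linear_combination (r ^ 2) * sin_sq_add_cos_sq τ + hr
    · linear_combination sin_sq_add_cos_sq τ
    · rw [hon.inner_smul_add_smul_add_smul]; ring
  have hlatitude : ∀ t, ∫ τ in (0 : ℝ)..2 * π, g (cos t • U τ + sin t • V τ) =
      latitudeIntegral g x e₁ e₂ (s * cos t) := fun t => by
    rw [← integral_rotation_eq_latitudeIntegral g x e₁ e₂ (a := r * cos t) (b := sin t)
      (by linear_combination (cos t ^ 2) * hr + sin_sq_add_cos_sq t)]
    congr 1; ext τ; congr 1
    module
  calc cosTransform (latitudeIntegral g x e₁ e₂) s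
      = ∫ t in (0 : ℝ)..2 * π, ∫ τ in (0 : ℝ)..2 * π, g (cos t • U τ + sin t • V τ) := by
        simp only [cosTransform, hlatitude]
    _ = ∫ τ in (0 : ℝ)..2 * π, funkTransform g (U τ) (V τ) :=
        intervalIntegral_intervalIntegral_swap_of_continuous (by fun_prop) _ _ _ _
    _ = 0 := by simp [hcircle]

theorem eq_zero_of_funkTransform_eq_zero (hg : Continuous g) (heven : g.Even)
    (hfunk : ∀ u v : E, ‖u‖ = 1 → ‖v‖ = 1 → ⟪u, v⟫ = 0 → funkTransform g u v = 0)
    (hon : Orthonormal ℝ ![x, e₁, e₂]) : g x = 0 := by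
  have h := eqOn_zero_of_cosTransform_eq_zero (continuous_latitudeIntegral hg)
    (latitudeIntegral_even heven)
    (fun s hs => cosTransform_latitudeIntegral_eq_zero hg hon hfunk (by nlinarith [hs.1, hs.2]))
    (right_mem_Icc.mpr zero_le_one)
  simpa [latitudeIntegral_one, pi_ne_zero] using h

end Sphere

lemma exists_orthonormal_triple {E : Type*} [NormedAddCommGroup E] [InnerProductSpace ℝ E]
    [FiniteDimensional ℝ E] (hE : 3 ≤ Module.finrank ℝ E) {x : E} (hx : ‖x‖ = 1) :
    ∃ e₁ e₂ : E, Orthonormal ℝ ![x, e₁, e₂] := by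
  let i : Fin 3 ↪ Fin (Module.finrank ℝ E) := Fin.castLEEmb hE
  obtain ⟨b, hb⟩ := Orthonormal.exists_orthonormalBasis_extension_of_card_eq
    (𝕜 := ℝ) (v := fun _ => x) (s := {i 0}) (by simp) (by simpa [orthonormal_iff_ite] using hx)
  refine ⟨b (i 1), b (i 2), ?_⟩
  convert b.orthonormal.comp i i.injective
  ext j
  fin_cases j <;> simp [hb]

/-- Funk's theorem: a continuous function on `S^n` (`n ≥ 2`) whose integrals over all
great circles vanish is odd on the sphere. -/
theorem funk_theorem (n : ℕ) (hn : 2 ≤ n)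
    (f : EuclideanSpace ℝ (Fin (n + 1)) → ℝ) (hf : Continuous f)
    (hfunk : ∀ u v : EuclideanSpace ℝ (Fin (n + 1)),
      ‖u‖ = 1 → ‖v‖ = 1 → ⟪u, v⟫ = 0 →
      (∫ t in (0 : ℝ)..(2 * π), f ((Real.cos t) • u + (Real.sin t) • v)) = 0) :
    ∀ x : EuclideanSpace ℝ (Fin (n + 1)), ‖x‖ = 1 → f (-x) = -f x := by
  intro x hx
  obtain ⟨e₁, e₂, hon⟩ := exists_orthonormal_triple (by rw [finrank_euclideanSpace_fin]; omega) hx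
  have hfneg : Continuous fun y => f (-y) := hf.comp continuous_neg
  have heven : (f + fun y => f (-y)).Even := fun y => by simp [add_comm]
  have hfunk_even : ∀ u v : EuclideanSpace ℝ (Fin (n + 1)), ‖u‖ = 1 → ‖v‖ = 1 → ⟪u, v⟫ = 0 →
      funkTransform (f + fun y => f (-y)) u v = 0 := fun u v hu hv huv => by
    rw [funkTransform_add hf hfneg, funkTransform_comp_neg, funkTransform, hfunk u v hu hv huv,
      add_zero]
  have h := eq_zero_of_funkTransform_eq_zero (hf.add hfneg) heven hfunk_even hon
  simp only [Pi.add_apply] at h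
  linarith
end

section
/- Let E be a real inner product space and let R ⊆ E be a crystallographic reduced root system (finite, 0 ∉ R; for all α, β ∈ R the Cartan number 2⟪β, α⟫/⟪α, α⟫ is an integer; for all α, β ∈ R the reflected vector β - (2⟪β, α⟫/⟪α, α⟫) • α lies in R; and the only scalar multiples of any α ∈ R lying in R are α and -α). Assume R is irreducible (R cannot be partitioned into two nonempty subsets R₁, R₂ with ⟪α, β⟫ = 0 for all α ∈ R₁ and β ∈ R₂) and that the linear span of R has dimension at least 2. Let δ ∈ R be a root of maximal length, i.e. ‖β‖ ≤ ‖δ‖ for all β ∈ R. Then there exist β₁, β₂ ∈ R with β₂ ≠ β₁ and β₂ ≠ -β₁ such that for i = 1, 2 the Cartan number 2⟪β_i, δ⟫/⟪δ, δ⟫ equals 1 or -1. -/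
/-!
A root `β ≠ ±δ` not orthogonal to `δ` exists by irreducibility and rank at least two. Since the
root system is reduced, `β` is not parallel to `δ`, so strict Cauchy–Schwarz and the maximality of
`‖δ‖` give `|n(β, δ)| < 2`; being a nonzero integer, `n(β, δ) = ±1`. The reflection
`s_δ β = β - n(β, δ) δ` is a second such root, with `n(s_δ β, δ) = -n(β, δ)`, and it is neither
`β` nor `-β`.
-/

open scoped RealInnerProductSpace
open Module

theorem exists_mem_ne_ne_neg_of_two_le_finrank_span {K V : Type*} [DivisionRing K]
    [AddCommGroup V] [Module K V] {R : Set V} (hrank : 2 ≤ finrank K (Submodule.span K R))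
    (v : V) : ∃ x ∈ R, x ≠ v ∧ x ≠ -v := by
  by_contra! h
  have hspan : Submodule.span K R ≤ K ∙ v := by
    rw [Submodule.span_le]
    intro x hx
    rcases eq_or_ne x v with rfl | hxv
    · exact Submodule.mem_span_singleton_self x
    · rw [h x hx hxv]
      exact Submodule.neg_mem _ (Submodule.mem_span_singleton_self v)
  have hle : finrank K (K ∙ v) ≤ 1 := by
    simpa using finrank_span_le_card (R := K) ({v} : Set V)
  have := Submodule.finrank_mono hspan
  omega

theorem sub_smul_ne_neg {K V : Type*} [Field K] [CharZero K] [AddCommGroup V]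
    [Module K V] {α β : V} (hβ : ∀ r : K, β ≠ r • α) (c : K) : β - c • α ≠ -β := by
  intro h
  apply hβ (2⁻¹ * c)
  have h2 : (2 : K) • β = c • α := by
    rw [two_smul]
    linear_combination (norm := module) h
  rw [mul_smul, ← h2, smul_smul, inv_mul_cancel₀ two_ne_zero, one_smul]

section InnerProductSpace

variable {E : Type*} [NormedAddCommGroup E] [InnerProductSpace ℝ E]

theorem abs_real_inner_lt_norm_mul_norm {x y : E} (hx : x ≠ 0) (hy : ∀ r : ℝ, y ≠ r • x) :
    |⟪x, y⟫| < ‖x‖ * ‖y‖ := by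
  refine (abs_real_inner_le_norm x y).lt_of_ne fun heq => ?_
  have hy0 : y ≠ 0 := by simpa using hy 0
  obtain ⟨r, -, hr⟩ := (norm_inner_eq_norm_iff (𝕜 := ℝ) hx hy0).mp heq
  exact hy r hr

theorem exists_mem_ne_ne_neg_inner_ne_zero {R : Set E}
    (hirr : ¬ ∃ R₁ R₂ : Set E, R₁.Nonempty ∧ R₂.Nonempty ∧ R₁ ∪ R₂ = R ∧
      R₁ ∩ R₂ = ∅ ∧ ∀ α ∈ R₁, ∀ β ∈ R₂, ⟪α, β⟫ = 0)
    (hrank : 2 ≤ finrank ℝ (Submodule.span ℝ R)) {δ : E} (hδ : δ ∈ R) :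
    ∃ β ∈ R, β ≠ δ ∧ β ≠ -δ ∧ ⟪β, δ⟫ ≠ 0 := by
  by_contra! horth
  obtain ⟨x, hx, hxδ, hxnδ⟩ := exists_mem_ne_ne_neg_of_two_le_finrank_span hrank δ
  refine hirr ⟨{δ, -δ} ∩ R, R \ {δ, -δ}, ⟨δ, by simp [hδ]⟩, ⟨x, by simp [*]⟩, ?_, ?_, ?_⟩
  · rw [Set.inter_comm {δ, -δ} R, Set.inter_union_sdiff]
  · exact Set.disjoint_iff_inter_eq_empty.mp
      (Set.disjoint_sdiff_right.mono_left Set.inter_subset_left)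
  · rintro α ⟨hα, -⟩ β ⟨hβ, hβδ⟩
    simp only [Set.mem_insert_iff, Set.mem_singleton_iff, not_or] at hα hβδ
    have hβorth := horth β hβ hβδ.1 hβδ.2
    rcases hα with rfl | rfl
    · rwa [real_inner_comm]
    · rw [inner_neg_left, real_inner_comm, hβorth, neg_zero]

noncomputable def cartanNumber (β α : E) : ℝ := 2 * ⟪β, α⟫ / ⟪α, α⟫

variable {α β : E}

theorem cartanNumber_eq_zero_iff (hα : α ≠ 0) : cartanNumber β α = 0 ↔ ⟪β, α⟫ = 0 := by
  simp [cartanNumber, hα]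

theorem cartanNumber_reflection (hα : α ≠ 0) :
    cartanNumber (β - cartanNumber β α • α) α = -cartanNumber β α := by
  have : ⟪α, α⟫ ≠ 0 := inner_self_ne_zero.mpr hα
  simp only [cartanNumber, inner_sub_left, real_inner_smul_left]
  field_simp
  ring

theorem abs_cartanNumber_lt_two (hα : α ≠ 0) (hβ : ∀ r : ℝ, β ≠ r • α) (hle : ‖β‖ ≤ ‖α‖) :
    |cartanNumber β α| < 2 := by
  have hpos : 0 < ‖α‖ * ‖α‖ := by positivity
  have hcs := abs_real_inner_lt_norm_mul_norm hα hβ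
  rw [cartanNumber, real_inner_self_eq_norm_mul_norm, abs_div, abs_mul, abs_two,
    abs_of_pos hpos, div_lt_iff₀ hpos, real_inner_comm]
  nlinarith [norm_nonneg α]

end InnerProductSpace

theorem eq_one_or_eq_neg_one_of_abs_lt_two {x : ℝ} {m : ℤ} (hm : x = m) (h0 : x ≠ 0)
    (h2 : |x| < 2) : x = 1 ∨ x = -1 := by
  subst hm
  have : m ≠ 0 := by exact_mod_cast h0
  have : |m| < 2 := by exact_mod_cast h2
  have : m = 1 ∨ m = -1 := by rw [abs_lt] at this; omega
  rcases this with rfl | rfl <;> simp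

theorem exists_two_roots_cartan_pm_one_general {E : Type*} [NormedAddCommGroup E]
    [InnerProductSpace ℝ E] (R : Set E)
    (hzero : (0 : E) ∉ R)
    (hcartan : ∀ α ∈ R, ∀ β ∈ R, ∃ m : ℤ, 2 * ⟪β, α⟫ / ⟪α, α⟫ = (m : ℝ))
    (hrefl : ∀ α ∈ R, ∀ β ∈ R, β - (2 * ⟪β, α⟫ / ⟪α, α⟫) • α ∈ R)
    (hreduced : ∀ α ∈ R, ∀ c : ℝ, c • α ∈ R → c = 1 ∨ c = -1)
    (hirr : ¬ ∃ R₁ R₂ : Set E, R₁.Nonempty ∧ R₂.Nonempty ∧ R₁ ∪ R₂ = R ∧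
      R₁ ∩ R₂ = ∅ ∧ ∀ α ∈ R₁, ∀ β ∈ R₂, ⟪α, β⟫ = 0)
    (hrank : 2 ≤ Module.finrank ℝ (Submodule.span ℝ R))
    (δ : E) (hδ : δ ∈ R) (hlong : ∀ β ∈ R, ‖β‖ ≤ ‖δ‖) :
    ∃ β₁ ∈ R, ∃ β₂ ∈ R, β₂ ≠ β₁ ∧ β₂ ≠ -β₁ ∧
      (2 * ⟪β₁, δ⟫ / ⟪δ, δ⟫ = 1 ∨ 2 * ⟪β₁, δ⟫ / ⟪δ, δ⟫ = -1) ∧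
      (2 * ⟪β₂, δ⟫ / ⟪δ, δ⟫ = 1 ∨ 2 * ⟪β₂, δ⟫ / ⟪δ, δ⟫ = -1) := by
  have hδ0 : δ ≠ 0 := ne_of_mem_of_not_mem hδ hzero
  obtain ⟨β, hβ, hβδ, hβnδ, hinner⟩ := exists_mem_ne_ne_neg_inner_ne_zero hirr hrank hδ
  have hβpar : ∀ r : ℝ, β ≠ r • δ := by
    rintro r rfl
    rcases hreduced δ hδ r hβ with rfl | rfl <;> simp at hβδ hβnδ
  have hn0 : cartanNumber β δ ≠ 0 := mt (cartanNumber_eq_zero_iff hδ0).mp hinner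
  obtain ⟨m, hm⟩ := hcartan δ hδ β hβ
  have hn : cartanNumber β δ = 1 ∨ cartanNumber β δ = -1 :=
    eq_one_or_eq_neg_one_of_abs_lt_two hm hn0 (abs_cartanNumber_lt_two hδ0 hβpar (hlong β hβ))
  have hn' : cartanNumber (β - cartanNumber β δ • δ) δ = 1 ∨
      cartanNumber (β - cartanNumber β δ • δ) δ = -1 := by
    rw [cartanNumber_reflection hδ0, neg_eq_iff_eq_neg, neg_eq_iff_eq_neg, neg_neg]
    exact hn.symm
  exact ⟨β, hβ, _, hrefl δ hδ β hβ, mt sub_eq_self.mp (smul_ne_zero hn0 hδ0),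
    sub_smul_ne_neg hβpar _, hn, hn'⟩

/-- Root-theoretic content of Proposition 5: in an irreducible reduced crystallographic
root system of rank at least two, for a longest root `δ` there are two sign-inequivalent
roots `β₁, β₂` whose Cartan numbers with `δ` equal `±1`. -/
theorem exists_two_roots_cartan_pm_one {E : Type*} [NormedAddCommGroup E]
    [InnerProductSpace ℝ E] (R : Set E)
    (hfin : R.Finite) (hzero : (0 : E) ∉ R)
    (hcartan : ∀ α ∈ R, ∀ β ∈ R, ∃ m : ℤ, 2 * ⟪β, α⟫ / ⟪α, α⟫ = (m : ℝ))
    (hrefl : ∀ α ∈ R, ∀ β ∈ R, β - (2 * ⟪β, α⟫ / ⟪α, α⟫) • α ∈ R)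
    (hreduced : ∀ α ∈ R, ∀ c : ℝ, c • α ∈ R → c = 1 ∨ c = -1)
    (hirr : ¬ ∃ R₁ R₂ : Set E, R₁.Nonempty ∧ R₂.Nonempty ∧ R₁ ∪ R₂ = R ∧
      R₁ ∩ R₂ = ∅ ∧ ∀ α ∈ R₁, ∀ β ∈ R₂, ⟪α, β⟫ = 0)
    (hrank : 2 ≤ Module.finrank ℝ (Submodule.span ℝ R))
    (δ : E) (hδ : δ ∈ R) (hlong : ∀ β ∈ R, ‖β‖ ≤ ‖δ‖) :
    ∃ β₁ ∈ R, ∃ β₂ ∈ R, β₂ ≠ β₁ ∧ β₂ ≠ -β₁ ∧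
      (2 * ⟪β₁, δ⟫ / ⟪δ, δ⟫ = 1 ∨ 2 * ⟪β₁, δ⟫ / ⟪δ, δ⟫ = -1) ∧
      (2 * ⟪β₂, δ⟫ / ⟪δ, δ⟫ = 1 ∨ 2 * ⟪β₂, δ⟫ / ⟪δ, δ⟫ = -1) :=
  exists_two_roots_cartan_pm_one_general R hzero hcartan hrefl hreduced hirr hrank δ hδ hlong
end
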